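/- If q > 3 is a prime, then the achromatic number of the unitary addition Cayley graph U(ℤ_{3q}) is at most (3q + 1)/2. -/

import Mathlib

/-- The unitary addition Cayley graph of a ring `R`: vertices are elements of `R`,
and distinct `x`, `y` are adjacent iff `x + y` is a unit. -/
def unitaryCayley (R : Type*) [CommRing R] : SimpleGraph R where
  Adj x y := x ≠ y ∧ IsUnit (x + y)
  symm := ⟨fun x y ⟨h1, h2⟩ => ⟨h1.symm, by rwa [add_comm]⟩⟩
  loopless := ⟨fun x ⟨h, _⟩ => h rfl⟩

/-- A proper coloring is complete if it is surjective and between every pair of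
distinct color classes there is at least one edge. -/
def IsCompleteColoring {V β : Type*} (G : SimpleGraph V) (C : G.Coloring β) : Prop :=
  Function.Surjective C ∧
    ∀ c₁ c₂ : β, c₁ ≠ c₂ → ∃ x y, G.Adj x y ∧ C x = c₁ ∧ C y = c₂

/-- The achromatic number: the maximum number of colors in a complete proper coloring. -/
noncomputable def achromaticNumber {V : Type*} (G : SimpleGraph V) : ℕ :=
  sSup {n | ∃ C : G.Coloring (Fin n), IsCompleteColoring G C}


/-!
Via the Chinese remainder theorem, `U(ℤ_{3q}) ≅ U(ℤ₃ × ℤ_q)`, in which distinct `x`, `y` are adjacent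
iff both coordinates of `x + y` are nonzero. The layer `V₀ = {0} × ℤ_q` is independent, so in a
complete coloring at most one color class lies inside `V₀`. If `{u}` is a singleton class with
`u₁ ≠ 0`, the class of `(0, -u₂)` must contain a neighbour of `u`, and this forces it into `V₀`;
moreover distinct such singletons are adjacent, hence have distinct second coordinates. So every
class meeting the complement of `V₀` can be charged with two vertices of its own — a singleton
`{u}` borrowing `(0, -u₂)` from a class inside `V₀` — and these charges are disjoint. Hence
`2(k - 1) ≤ 3q`, and since `3q` is odd, `k ≤ (3q + 1) / 2`.
-/

open SimpleGraph

theorem two_mul_card_le_of_disjoint_pairs {ι X : Type*} [Fintype ι] [Fintype X]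
    (R : ι → X → Prop) (hR : ∀ i j x, R i x → R j x → i = j)
    (hpair : ∀ i, ∃ x y, x ≠ y ∧ R i x ∧ R i y) :
    2 * Fintype.card ι ≤ Fintype.card X := by
  choose x y hxy hx hy using hpair
  have hinj : Function.Injective (Sum.elim x y) := by
    rintro (i | i) (j | j) h <;>
      simp only [Sum.elim_inl, Sum.elim_inr, Sum.inl.injEq, Sum.inr.injEq, reduceCtorEq] at h ⊢
    · exact hR i j _ (hx i) (h ▸ hx j)
    · obtain rfl := hR i j _ (hx i) (h ▸ hy j)
      exact hxy i h
    · obtain rfl := hR i j _ (hy i) (h ▸ hx j)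
      exact hxy i h.symm
    · exact hR i j _ (hy i) (h ▸ hy j)
  simpa [two_mul] using Fintype.card_le_of_injective _ hinj

section CompleteColoring

variable {V W β : Type*} {G : SimpleGraph V} {C : G.Coloring β}

theorem IsCompleteColoring.comp_iso {H : SimpleGraph W} (hC : IsCompleteColoring G C)
    (e : H ≃g G) : IsCompleteColoring H (C.comp e.toHom) := by
  refine ⟨fun c => ?_, fun c₁ c₂ hne => ?_⟩
  · obtain ⟨x, rfl⟩ := hC.1 c
    exact ⟨e.symm x, by simp⟩
  · obtain ⟨x, y, hxy, rfl, rfl⟩ := hC.2 c₁ c₂ hne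
    exact ⟨e.symm x, e.symm y, e.symm.map_adj_iff.2 hxy, by simp, by simp⟩

theorem IsCompleteColoring.eq_of_colorClass_subset (hC : IsCompleteColoring G C) {S : Set V}
    (hS : G.IsIndepSet S) {c₁ c₂ : β} (h₁ : C.colorClass c₁ ⊆ S) (h₂ : C.colorClass c₂ ⊆ S) :
    c₁ = c₂ := by
  by_contra hne
  obtain ⟨x, y, hxy, hx, hy⟩ := hC.2 c₁ c₂ hne
  exact hS (h₁ hx) (h₂ hy) hxy.ne hxy

end CompleteColoring

def unitaryCayleyCongr {R S : Type*} [CommRing R] [CommRing S] (e : R ≃+* S) :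
    unitaryCayley R ≃g unitaryCayley S where
  toEquiv := e.toEquiv
  map_rel_iff' {x y} := by
    change e x ≠ e y ∧ IsUnit (e x + e y) ↔ x ≠ y ∧ IsUnit (x + y)
    rw [← map_add, isUnit_map_iff, e.injective.ne_iff]

theorem unitaryCayley_prod_adj {R S : Type*} [CommRing R] [CommRing S] {v w : R × S} :
    (unitaryCayley (R × S)).Adj v w ↔ v ≠ w ∧ IsUnit (v.1 + w.1) ∧ IsUnit (v.2 + w.2) :=
  and_congr_right' Prod.isUnit_iff

theorem ZMod.three_add_eq_zero_of_ne {a b : ZMod 3} (ha : a ≠ 0) (hb : b ≠ 0) (hab : a ≠ b) :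
    a + b = 0 := by
  revert a b
  decide

section ZModThreeProd

variable {K β : Type*} [Field K] {C : (unitaryCayley (ZMod 3 × K)).Coloring β}

theorem unitaryCayley_zmod_three_prod_adj {v w : ZMod 3 × K} :
    (unitaryCayley (ZMod 3 × K)).Adj v w ↔ v ≠ w ∧ v.1 + w.1 ≠ 0 ∧ v.2 + w.2 ≠ 0 := by
  simp only [unitaryCayley_prod_adj, isUnit_iff_ne_zero]

theorem isIndepSet_fst_eq_zero : (unitaryCayley (ZMod 3 × K)).IsIndepSet {v | v.1 = 0} :=
  fun v hv w hw _ hadj => (unitaryCayley_zmod_three_prod_adj.1 hadj).2.1 (by simp_all)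

theorem fst_add_eq_zero_or_snd_add_eq_zero_of_color_eq {v w : ZMod 3 × K} (h : C v = C w)
    (hne : v ≠ w) : v.1 + w.1 = 0 ∨ v.2 + w.2 = 0 := by
  by_contra! hcon
  exact C.valid (unitaryCayley_zmod_three_prod_adj.2 ⟨hne, hcon⟩) h

theorem colorClass_zero_neg_snd_subset (hC : IsCompleteColoring _ C) {u : ZMod 3 × K}
    (hu : u.1 ≠ 0) (hsing : ∀ w, C w = C u → w = u) :
    C.colorClass (C (0, -u.2)) ⊆ {v | v.1 = 0} := by
  set x : ZMod 3 × K := (0, -u.2)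
  have hxu : C x ≠ C u := fun h => hu (by rw [← hsing x h])
  -- a vertex of colour `C x` off the layer `V₀` is `(-u.1, u.2)`, hence not adjacent to `u`
  have off_layer : ∀ a, C a = C x → a.1 ≠ 0 → a.2 = u.2 ∧ a.1 + u.1 = 0 := by
    intro a ha ha0
    have h2 : a.2 = u.2 := by
      rcases fst_add_eq_zero_or_snd_add_eq_zero_of_color_eq ha (fun h => ha0 (h ▸ rfl)) with h | h
      · simp_all [x]
      · simpa [x, add_neg_eq_zero] using h
    refine ⟨h2, ZMod.three_add_eq_zero_of_ne ha0 hu fun h1 => hxu ?_⟩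
    rw [← ha, Prod.ext h1 h2]
  intro w hw
  by_contra hw0
  obtain ⟨a, b, hab, ha, hb⟩ := hC.2 _ _ hxu
  rw [hsing b hb, unitaryCayley_zmod_three_prod_adj] at hab
  by_cases ha0 : a.1 = 0
  · have haw : a ≠ w := fun h => hw0 (h ▸ ha0)
    rcases fst_add_eq_zero_or_snd_add_eq_zero_of_color_eq (ha.trans hw.symm) haw with h | h
    · simp_all
    · exact hab.2.2 (by rwa [← (off_layer w hw hw0).1])
  · exact hab.2.1 (off_layer a ha ha0).2

theorem eq_of_singleton_of_snd_eq (hC : IsCompleteColoring _ C) {u u' : ZMod 3 × K}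
    (hu : u.1 ≠ 0) (hu' : u'.1 ≠ 0) (hsing : ∀ w, C w = C u → w = u)
    (hsing' : ∀ w, C w = C u' → w = u') (h2 : u.2 = u'.2) : u = u' := by
  by_contra hne
  have hc : C u ≠ C u' := fun h => hne (hsing u' h.symm).symm
  obtain ⟨a, b, hab, ha, hb⟩ := hC.2 _ _ hc
  rw [hsing a ha, hsing' b hb, unitaryCayley_zmod_three_prod_adj] at hab
  exact hne (Prod.ext (by_contra fun h1 => hab.2.1 (ZMod.three_add_eq_zero_of_ne hu hu' h1)) h2)

def ChargedTo (C : (unitaryCayley (ZMod 3 × K)).Coloring β) (c : β) (v : ZMod 3 × K) : Prop :=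
  C v = c ∨ ∃ u, C u = c ∧ (∀ w, C w = c → w = u) ∧ v = (0, -u.2)

theorem colorClass_subset_of_chargedTo_of_ne (hC : IsCompleteColoring _ C) {c : β}
    (hc : ∃ v, C v = c ∧ v.1 ≠ 0) {v : ZMod 3 × K} (hv : ChargedTo C c v) (hvc : C v ≠ c) :
    C.colorClass (C v) ⊆ {w | w.1 = 0} := by
  obtain ⟨a, rfl, ha0⟩ := hc
  rcases hv with hv | ⟨u, hu, hsing, rfl⟩
  · exact absurd hv hvc
  · have hau := hsing a rfl
    subst hau
    exact colorClass_zero_neg_snd_subset hC ha0 hsing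

theorem eq_of_chargedTo (hC : IsCompleteColoring _ C) {c c' : β} (hc : ∃ v, C v = c ∧ v.1 ≠ 0)
    (hc' : ∃ v, C v = c' ∧ v.1 ≠ 0) {v : ZMod 3 × K} (h : ChargedTo C c v)
    (h' : ChargedTo C c' v) : c = c' := by
  have outer : ∀ {d}, (∃ v, C v = d ∧ v.1 ≠ 0) → ¬ C.colorClass d ⊆ {w | w.1 = 0} :=
    fun ⟨w, hw, hw0⟩ hsub => hw0 (hsub hw)
  by_cases hvc : C v = c
  · by_contra hne
    exact outer hc (hvc ▸ colorClass_subset_of_chargedTo_of_ne hC hc' h' (hvc ▸ hne))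
  by_cases hvc' : C v = c'
  · exact (outer hc' (hvc' ▸ colorClass_subset_of_chargedTo_of_ne hC hc h hvc)).elim
  obtain ⟨u, rfl, hsing, rfl⟩ := h.resolve_left hvc
  obtain ⟨u', rfl, hsing', hv⟩ := h'.resolve_left hvc'
  obtain ⟨a, ha, ha0⟩ := hc
  obtain ⟨a', ha', ha0'⟩ := hc'
  rw [hsing a ha] at ha0
  rw [hsing' a' ha'] at ha0'
  rw [eq_of_singleton_of_snd_eq hC ha0 ha0' hsing hsing' (by simpa using hv)]

theorem exists_pair_chargedTo {c : β} (hc : ∃ v, C v = c ∧ v.1 ≠ 0) :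
    ∃ x y, x ≠ y ∧ ChargedTo C c x ∧ ChargedTo C c y := by
  obtain ⟨v, hv, hv0⟩ := hc
  by_cases hsing : ∀ w, C w = c → w = v
  · refine ⟨v, (0, -v.2), fun h => hv0 (congrArg Prod.fst h), .inl hv, .inr ⟨v, hv, hsing, rfl⟩⟩
  · push Not at hsing
    obtain ⟨w, hw, hwv⟩ := hsing
    exact ⟨w, v, hwv, .inl hw, .inl hv⟩

theorem two_mul_card_le_of_isCompleteColoring [Fintype K] [Fintype β]
    (hC : IsCompleteColoring _ C) : 2 * Fintype.card β ≤ 3 * Fintype.card K + 2 := by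
  classical
  have hinner : Fintype.card {c : β // ¬ ∃ v, C v = c ∧ v.1 ≠ 0} ≤ 1 := by
    refine Fintype.card_le_one_iff_subsingleton.2 ⟨fun ⟨c, hc⟩ ⟨c', hc'⟩ => Subtype.ext ?_⟩
    push Not at hc hc'
    exact hC.eq_of_colorClass_subset isIndepSet_fst_eq_zero hc hc'
  have houter : 2 * Fintype.card {c : β // ∃ v, C v = c ∧ v.1 ≠ 0} ≤ Fintype.card (ZMod 3 × K) :=
    two_mul_card_le_of_disjoint_pairs (fun c => ChargedTo C c.1)
      (fun c c' _ h h' => Subtype.ext (eq_of_chargedTo hC c.2 c'.2 h h'))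
      (fun c => exists_pair_chargedTo c.2)
  rw [Fintype.card_subtype_compl] at hinner
  rw [Fintype.card_prod, ZMod.card] at houter
  omega

end ZModThreeProd

theorem stmt_4 (q : ℕ) (hq : q.Prime) (h3 : 3 < q) :
    achromaticNumber (unitaryCayley (ZMod (3 * q))) ≤ (3 * q + 1) / 2 := by
  have : Fact q.Prime := ⟨hq⟩
  have hcop : Nat.Coprime 3 q := (Nat.coprime_primes Nat.prime_three hq).2 (by omega)
  obtain ⟨m, rfl⟩ := hq.odd_of_ne_two (by omega)
  refine csSup_le' fun k ⟨C, hC⟩ => ?_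
  have hk := two_mul_card_le_of_isCompleteColoring
    (hC.comp_iso (unitaryCayleyCongr (ZMod.chineseRemainder hcop)).symm)
  rw [Fintype.card_fin, ZMod.card] at hk
  omega
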